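/- In dimension 2 the identities (2), (3), (4) are automatic: Let V be a 2-dimensional real vector space with two bilinear skew-symmetric operations x·y, x*y and a trilinear operation ⟨x;y,z⟩ skew-symmetric in y,z (no further axioms assumed). Then for all ξ, η, ζ, θ ∈ V, where σ denotes the cyclic sum over ξ,η,ζ: σ{ξ·(η·ζ) − ⟨ξ;η,ζ⟩} = 0, σ{ζ*(ξ·η)} = 0, and σ{⟨θ;ζ,ξ·η⟩} = 0. -/

import Mathlib

/-- A (binary-binary-ternary) triple algebra: a real vector space with two
bilinear skew-symmetric binary operations `mul` (x·y), `star` (x*y) and a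
trilinear operation `tri` (⟨x;y,z⟩) skew-symmetric in its last two arguments. -/
structure TripleAlg (V : Type*) [AddCommGroup V] [Module ℝ V] where
  mul : V → V → V
  star : V → V → V
  tri : V → V → V → V
  mul_add_left : ∀ x y z : V, mul (x + y) z = mul x z + mul y z
  mul_smul_left : ∀ (r : ℝ) (x y : V), mul (r • x) y = r • mul x y
  mul_skew : ∀ x y : V, mul x y = -mul y x
  star_add_left : ∀ x y z : V, star (x + y) z = star x z + star y z
  star_smul_left : ∀ (r : ℝ) (x y : V), star (r • x) y = r • star x y
  star_skew : ∀ x y : V, star x y = -star y x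
  tri_add_fst : ∀ x y z w : V, tri (x + y) z w = tri x z w + tri y z w
  tri_smul_fst : ∀ (r : ℝ) (x z w : V), tri (r • x) z w = r • tri x z w
  tri_add_snd : ∀ x y z w : V, tri x (y + z) w = tri x y w + tri x z w
  tri_smul_snd : ∀ (r : ℝ) (x y w : V), tri x (r • y) w = r • tri x y w
  tri_skew : ∀ x y z : V, tri x y z = -tri x z y

namespace TripleAlg

variable {V : Type*} [AddCommGroup V] [Module ℝ V]

/-- The summand of identity (11), to be summed cyclically over the pairs
(ξ,η), (ζ,κ), (l,m). -/
def term11 (A : TripleAlg V) (ξ η ζ κ l m : V) : V :=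
  A.tri (A.tri (A.mul ξ η) ζ κ + A.mul η (A.tri ξ ζ κ) - A.mul ξ (A.tri η ζ κ)) l m
    + A.tri (A.mul l m) (A.tri η ζ κ) ξ + A.mul m (A.tri l (A.tri η ζ κ) ξ)
    - A.mul l (A.tri m (A.tri η ζ κ) ξ)
    - (A.tri (A.mul l m) (A.tri ξ ζ κ) η + A.mul m (A.tri l (A.tri ξ ζ κ) η)
        - A.mul l (A.tri m (A.tri ξ ζ κ) η))

/-- The summand of identity (12). -/
def term12 (A : TripleAlg V) (ξ η ζ κ l m : V) : V :=
  A.star (A.tri m (A.tri η ζ κ) ξ - A.tri m (A.tri ξ ζ κ) η) l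
    + A.star (A.tri l (A.tri ξ ζ κ) η - A.tri l (A.tri η ζ κ) ξ) m

/-- The summand of identity (13). -/
def term13 (A : TripleAlg V) (θ ξ η ζ κ l m : V) : V :=
  A.tri θ (A.tri m (A.tri η ζ κ) ξ - A.tri m (A.tri ξ ζ κ) η) l
    + A.tri θ (A.tri l (A.tri ξ ζ κ) η - A.tri l (A.tri η ζ κ) ξ) m

/-- The defining identities (2)–(13) of an (abstract) hyporeductive triple
algebra. -/
def IsHTA (A : TripleAlg V) : Prop :=
  -- (2)
  (∀ ξ η ζ : V,
    A.mul ξ (A.mul η ζ) - A.tri ξ η ζ + A.mul η (A.mul ζ ξ) - A.tri η ζ ξ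
      + A.mul ζ (A.mul ξ η) - A.tri ζ ξ η = 0) ∧
  -- (3)
  (∀ ξ η ζ : V,
    A.star ζ (A.mul ξ η) + A.star ξ (A.mul η ζ) + A.star η (A.mul ζ ξ) = 0) ∧
  -- (4)
  (∀ θ ξ η ζ : V,
    A.tri θ ζ (A.mul ξ η) + A.tri θ ξ (A.mul η ζ) + A.tri θ η (A.mul ζ ξ) = 0) ∧
  -- (5)
  (∀ ξ η ζ κ : V,
    A.mul κ (A.tri ζ ξ η) - A.mul ζ (A.tri κ ξ η) + A.tri (A.mul ζ κ) ξ η =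
      A.tri (A.star ξ η) ζ κ - A.tri (A.star ζ κ) ξ η
        + A.star ζ (A.tri κ ξ η) - A.star κ (A.tri ζ ξ η)
        + A.star (A.star ξ η) (A.star ζ κ) + A.mul (A.star ξ η) (A.star ζ κ)) ∧
  -- (6)
  (∀ ξ η ζ κ χ : V,
    A.mul χ (A.mul κ (A.tri ζ ξ η) - A.mul ζ (A.tri κ ξ η) + A.tri (A.mul ζ κ) ξ η)
      + A.tri (A.tri χ ξ η) ζ κ - A.tri (A.tri χ ζ κ) ξ η
      + A.tri χ ζ (A.tri κ ξ η) - A.tri χ κ (A.tri ζ ξ η) = 0) ∧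
  -- (7)
  (∀ ξ η ζ κ χ : V,
    A.star χ (A.mul κ (A.tri ζ ξ η) - A.mul ζ (A.tri κ ξ η) + A.tri (A.mul ζ κ) ξ η) = 0) ∧
  -- (8)
  (∀ ξ η ζ κ θ χ : V,
    A.tri θ χ (A.mul κ (A.tri ζ ξ η) - A.mul ζ (A.tri κ ξ η) + A.tri (A.mul ζ κ) ξ η) = 0) ∧
  -- (9)
  (∀ ξ η ζ κ : V,
    A.mul κ (A.tri ζ ξ η) - A.mul ζ (A.tri κ ξ η) + A.tri (A.mul ζ κ) ξ η
      + A.mul η (A.tri ξ ζ κ) - A.mul ξ (A.tri η ζ κ) + A.tri (A.mul ξ η) ζ κ = 0) ∧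
  -- (10)
  (∀ ξ η ζ κ : V,
    A.star ζ (A.tri κ ξ η) - A.star κ (A.tri ζ ξ η)
      + A.star ξ (A.tri η ζ κ) - A.star η (A.tri ξ ζ κ) = 0) ∧
  -- (11)
  (∀ ξ η ζ κ l m : V,
    A.term11 ξ η ζ κ l m + A.term11 ζ κ l m ξ η + A.term11 l m ξ η ζ κ = 0) ∧
  -- (12)
  (∀ ξ η ζ κ l m : V,
    A.term12 ξ η ζ κ l m + A.term12 ζ κ l m ξ η + A.term12 l m ξ η ζ κ = 0) ∧
  -- (13)
  (∀ θ ξ η ζ κ l m : V,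
    A.term13 θ ξ η ζ κ l m + A.term13 θ ζ κ l m ξ η + A.term13 θ l m ξ η ζ κ = 0)

/-- The expression J(u,v) = u*⟨v;u,v⟩ − v*⟨u;u,v⟩. -/
def J (A : TripleAlg V) (u v : V) : V :=
  A.star u (A.tri v u v) - A.star v (A.tri u u v)

end TripleAlg

namespace TripleAlg

section Aux

variable {V : Type*} [AddCommGroup V] [Module ℝ V] (A : TripleAlg V)

private lemma eq_neg_self' {a : V} (h : a = -a) : a = 0 := by
  have h2 : (2 : ℝ) • a = 0 := by
    rw [two_smul]; nth_rewrite 2 [h]; simp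
  have := smul_eq_zero.mp h2
  simpa using this

lemma mul_add_right (x y z : V) : A.mul x (y + z) = A.mul x y + A.mul x z := by
  rw [A.mul_skew x (y + z), A.mul_add_left, A.mul_skew y x, A.mul_skew z x]; abel

lemma mul_smul_right (r : ℝ) (x y : V) : A.mul x (r • y) = r • A.mul x y := by
  rw [A.mul_skew x (r • y), A.mul_smul_left, A.mul_skew y x]; simp

lemma star_add_right (x y z : V) : A.star x (y + z) = A.star x y + A.star x z := by
  rw [A.star_skew x (y + z), A.star_add_left, A.star_skew y x, A.star_skew z x]; abel

lemma star_smul_right (r : ℝ) (x y : V) : A.star x (r • y) = r • A.star x y := by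
  rw [A.star_skew x (r • y), A.star_smul_left, A.star_skew y x]; simp

lemma tri_add_thd (x y z w : V) : A.tri x y (z + w) = A.tri x y z + A.tri x y w := by
  rw [A.tri_skew x y (z + w), A.tri_add_snd, A.tri_skew x z y, A.tri_skew x w y]; abel

lemma tri_smul_thd (r : ℝ) (x y z : V) : A.tri x y (r • z) = r • A.tri x y z := by
  rw [A.tri_skew x y (r • z), A.tri_smul_snd, A.tri_skew x z y]; simp

lemma mul_self (x : V) : A.mul x x = 0 := eq_neg_self' (A.mul_skew x x)

lemma star_self (x : V) : A.star x x = 0 := eq_neg_self' (A.star_skew x x)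

lemma tri_self (x y : V) : A.tri x y y = 0 := eq_neg_self' (A.tri_skew x y y)

lemma mul_zero_right (x : V) : A.mul x 0 = 0 := by
  have h := A.mul_smul_right (0 : ℝ) x 0; simpa using h

lemma star_zero_right (x : V) : A.star x 0 = 0 := by
  have h := A.star_smul_right (0 : ℝ) x 0; simpa using h

lemma tri_zero_thd (x y : V) : A.tri x y 0 = 0 := by
  have h := A.tri_smul_thd (0 : ℝ) x y 0; simpa using h

lemma mul_neg_right (x y : V) : A.mul x (-y) = -A.mul x y := by
  have h := A.mul_smul_right (-1 : ℝ) x y; simpa using h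

lemma star_neg_right (x y : V) : A.star x (-y) = -A.star x y := by
  have h := A.star_smul_right (-1 : ℝ) x y; simpa using h

lemma tri_neg_snd (x y w : V) : A.tri x (-y) w = -A.tri x y w := by
  have h := A.tri_smul_snd (-1 : ℝ) x y w; simpa using h

lemma tri_neg_thd (x y z : V) : A.tri x y (-z) = -A.tri x y z := by
  have h := A.tri_smul_thd (-1 : ℝ) x y z; simpa using h

/-- A map which is linear in each of three slots and vanishes whenever two
arguments coincide is identically zero on a space spanned by two vectors. -/
lemma alt3_vanish (e₀ e₁ : V)
    (hspan : ∀ v : V, ∃ a b : ℝ, v = a • e₀ + b • e₁)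
    (f : V → V → V → V)
    (h1a : ∀ x x' y z : V, f (x + x') y z = f x y z + f x' y z)
    (h1s : ∀ (r : ℝ) (x y z : V), f (r • x) y z = r • f x y z)
    (h2a : ∀ x y y' z : V, f x (y + y') z = f x y z + f x y' z)
    (h2s : ∀ (r : ℝ) (x y z : V), f x (r • y) z = r • f x y z)
    (h3a : ∀ x y z z' : V, f x y (z + z') = f x y z + f x y z')
    (h3s : ∀ (r : ℝ) (x y z : V), f x y (r • z) = r • f x y z)
    (hz12 : ∀ x z : V, f x x z = 0)
    (hz13 : ∀ x y : V, f x y x = 0)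
    (hz23 : ∀ x y : V, f x y y = 0) :
    ∀ x y z : V, f x y z = 0 := by
  intro x y z
  obtain ⟨a₁, a₂, hx⟩ := hspan x
  obtain ⟨b₁, b₂, hy⟩ := hspan y
  obtain ⟨c₁, c₂, hz⟩ := hspan z
  subst hx hy hz
  simp only [h1a, h1s, h2a, h2s, h3a, h3s, hz12, hz13, hz23, smul_zero, add_zero, zero_add]

end Aux

end TripleAlg

/-- In dimension 2 the identities (2), (3), (4) hold automatically for any
bilinear skew-symmetric operations · and * and any trilinear operation
⟨;,⟩ skew-symmetric in its last two arguments. -/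
theorem two_dim_identities_2_3_4_automatic {V : Type*} [AddCommGroup V]
    [Module ℝ V] (hdim : Module.finrank ℝ V = 2) (A : TripleAlg V) :
    (∀ ξ η ζ : V,
      A.mul ξ (A.mul η ζ) - A.tri ξ η ζ + A.mul η (A.mul ζ ξ) - A.tri η ζ ξ
        + A.mul ζ (A.mul ξ η) - A.tri ζ ξ η = 0) ∧
    (∀ ξ η ζ : V,
      A.star ζ (A.mul ξ η) + A.star ξ (A.mul η ζ) + A.star η (A.mul ζ ξ) = 0) ∧
    (∀ θ ξ η ζ : V,
      A.tri θ ζ (A.mul ξ η) + A.tri θ ξ (A.mul η ζ) + A.tri θ η (A.mul ζ ξ) = 0) := by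
  have : FiniteDimensional ℝ V := FiniteDimensional.of_finrank_pos (by omega)
  set b := Module.finBasisOfFinrankEq ℝ V hdim with hb
  have hspan : ∀ v : V, ∃ a c : ℝ, v = a • b 0 + c • b 1 := by
    intro v
    refine ⟨b.repr v 0, b.repr v 1, ?_⟩
    have h := b.sum_repr v
    rw [Fin.sum_univ_two] at h
    exact h.symm
  refine ⟨?_, ?_, ?_⟩
  · -- identity (2)
    refine TripleAlg.alt3_vanish (b 0) (b 1) hspan
      (fun ξ η ζ => A.mul ξ (A.mul η ζ) - A.tri ξ η ζ + A.mul η (A.mul ζ ξ) - A.tri η ζ ξ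
        + A.mul ζ (A.mul ξ η) - A.tri ζ ξ η) ?_ ?_ ?_ ?_ ?_ ?_ ?_ ?_ ?_
    · intro x x' y z
      simp only [A.mul_add_left, A.mul_add_right, A.tri_add_fst, A.tri_add_snd, A.tri_add_thd]
      abel
    · intro r x y z
      simp only [A.mul_smul_left, A.mul_smul_right, A.tri_smul_fst, A.tri_smul_snd,
        A.tri_smul_thd, smul_add, smul_sub]
    · intro x y y' z
      simp only [A.mul_add_left, A.mul_add_right, A.tri_add_fst, A.tri_add_snd, A.tri_add_thd]
      abel
    · intro r x y z
      simp only [A.mul_smul_left, A.mul_smul_right, A.tri_smul_fst, A.tri_smul_snd,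
        A.tri_smul_thd, smul_add, smul_sub]
    · intro x y z z'
      simp only [A.mul_add_left, A.mul_add_right, A.tri_add_fst, A.tri_add_snd, A.tri_add_thd]
      abel
    · intro r x y z
      simp only [A.mul_smul_left, A.mul_smul_right, A.tri_smul_fst, A.tri_smul_snd,
        A.tri_smul_thd, smul_add, smul_sub]
    · intro x z
      rw [A.mul_skew z x, A.tri_skew x z x, A.mul_self, A.mul_zero_right,
        A.mul_neg_right, A.tri_self]
      abel
    · intro x y
      rw [A.mul_skew y x, A.tri_skew x y x, A.mul_self, A.mul_zero_right,
        A.mul_neg_right, A.tri_self]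
      abel
    · intro x y
      rw [A.mul_skew y x, A.tri_skew y x y, A.mul_self, A.mul_zero_right,
        A.mul_neg_right, A.tri_self]
      abel
  · -- identity (3)
    refine TripleAlg.alt3_vanish (b 0) (b 1) hspan
      (fun ξ η ζ => A.star ζ (A.mul ξ η) + A.star ξ (A.mul η ζ) + A.star η (A.mul ζ ξ))
      ?_ ?_ ?_ ?_ ?_ ?_ ?_ ?_ ?_
    · intro x x' y z
      simp only [A.mul_add_left, A.mul_add_right, A.star_add_left, A.star_add_right]
      abel
    · intro r x y z
      simp only [A.mul_smul_left, A.mul_smul_right, A.star_smul_left, A.star_smul_right,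
        smul_add]
    · intro x y y' z
      simp only [A.mul_add_left, A.mul_add_right, A.star_add_left, A.star_add_right]
      abel
    · intro r x y z
      simp only [A.mul_smul_left, A.mul_smul_right, A.star_smul_left, A.star_smul_right,
        smul_add]
    · intro x y z z'
      simp only [A.mul_add_left, A.mul_add_right, A.star_add_left, A.star_add_right]
      abel
    · intro r x y z
      simp only [A.mul_smul_left, A.mul_smul_right, A.star_smul_left, A.star_smul_right,
        smul_add]
    · intro x z
      rw [A.mul_self, A.mul_skew z x, A.star_neg_right]
      simp [A.star_zero_right]
    · intro x y
      rw [A.mul_self, A.mul_skew y x, A.star_neg_right]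
      simp [A.star_zero_right]
    · intro x y
      rw [A.mul_self, A.mul_skew y x, A.star_neg_right]
      simp [A.star_zero_right]
  · -- identity (4)
    intro θ
    refine TripleAlg.alt3_vanish (b 0) (b 1) hspan
      (fun ξ η ζ => A.tri θ ζ (A.mul ξ η) + A.tri θ ξ (A.mul η ζ) + A.tri θ η (A.mul ζ ξ))
      ?_ ?_ ?_ ?_ ?_ ?_ ?_ ?_ ?_
    · intro x x' y z
      simp only [A.mul_add_left, A.mul_add_right, A.tri_add_snd, A.tri_add_thd]
      abel
    · intro r x y z
      simp only [A.mul_smul_left, A.mul_smul_right, A.tri_smul_snd, A.tri_smul_thd, smul_add]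
    · intro x y y' z
      simp only [A.mul_add_left, A.mul_add_right, A.tri_add_snd, A.tri_add_thd]
      abel
    · intro r x y z
      simp only [A.mul_smul_left, A.mul_smul_right, A.tri_smul_snd, A.tri_smul_thd, smul_add]
    · intro x y z z'
      simp only [A.mul_add_left, A.mul_add_right, A.tri_add_snd, A.tri_add_thd]
      abel
    · intro r x y z
      simp only [A.mul_smul_left, A.mul_smul_right, A.tri_smul_snd, A.tri_smul_thd, smul_add]
    · intro x z
      rw [A.mul_self, A.mul_skew z x, A.tri_neg_thd]
      simp [A.tri_zero_thd]
    · intro x y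
      rw [A.mul_self, A.mul_skew y x, A.tri_neg_thd]
      simp [A.tri_zero_thd]
    · intro x y
      rw [A.mul_self, A.mul_skew y x, A.tri_neg_thd]
      simp [A.tri_zero_thd]
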